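/- arXiv:1911.08809 — 5 statements merged into one kernel-verified Lean document; each statement's English description precedes it below -/
import Mathlib

section
/- The distance-based mechanism is individually rational: for every buyer i with true type θ_i = (v_i, r_i) and every profile θ'_{-i} of reports of the other buyers, if i reports θ_i truthfully then her utility is nonnegative, i.e., v_i·f_i(θ_i, θ'_{-i}) − t_i(θ_i, θ'_{-i}) ≥ 0. -/
open scoped Classical NNReal ENNReal

namespace SNA

/-- A reported type `θ'_i = (v'_i, r'_i)`: a (nonnegative) value for one unit together with
the set of followers to whom the buyer forwards the information. -/
abbrev Profile (N : Type*) := N → ℝ≥0 × Finset N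

variable {N : Type*} [Fintype N] [DecidableEq N] [LinearOrder N]

/-- `reachIn θ rs m i`: in the digraph induced by the reported profile `θ` and the
seller's direct-buyer set `rs` (the seller links to every member of `rs`, and each buyer
`j` links to every member of `(θ j).2`), there is a directed path from the seller to `i`
using exactly `m + 1` edges. -/
def reachIn (θ : Profile N) (rs : Finset N) : ℕ → N → Prop
  | 0, i => i ∈ rs
  | m + 1, i => ∃ j, reachIn θ rs m j ∧ i ∈ (θ j).2

/-- Buyer `i` is connected: reachable from the seller. -/
def Connected (θ : Profile N) (rs : Finset N) (i : N) : Prop :=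
  ∃ m, reachIn θ rs m i

/-- `N̂`: the set of connected buyers. -/
noncomputable def Nhat (θ : Profile N) (rs : Finset N) : Finset N :=
  Finset.univ.filter (Connected θ rs)

/-- `d(i)`: the length of a shortest directed path from the seller to `i`
(`⊤` if `i` is not connected). -/
noncomputable def dNet (θ : Profile N) (rs : Finset N) (i : N) : ℕ∞ :=
  sInf {n : ℕ∞ | ∃ m : ℕ, reachIn θ rs m i ∧ n = (m : ℕ∞) + 1}

/-- Reachability from the seller by a directed path that avoids buyer `j`. -/
def reachInAvoid (θ : Profile N) (rs : Finset N) (j : N) : ℕ → N → Prop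
  | 0, i => i ∈ rs ∧ i ≠ j
  | m + 1, i => ∃ a, reachInAvoid θ rs j m a ∧ i ∈ (θ a).2 ∧ i ≠ j

/-- `j` is a critical parent of `i`: both are connected, `j ≠ i`, and every directed path
from the seller to `i` passes through `j`. -/
def CriticalParent (θ : Profile N) (rs : Finset N) (j i : N) : Prop :=
  Connected θ rs i ∧ Connected θ rs j ∧ j ≠ i ∧ ¬ ∃ m, reachInAvoid θ rs j m i

/-- The descendants of `i` in the diffusion critical tree `T(θ)`, i.e. `i` together with
the connected buyers lying in the subtree of `T(θ)` rooted at `i`; the ancestors of a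
buyer in the diffusion critical tree are exactly its critical parents. -/
noncomputable def desc (θ : Profile N) (rs : Finset N) (i : N) : Finset N :=
  Finset.univ.filter fun j => Connected θ rs j ∧ (j = i ∨ CriticalParent θ rs i j)

/-- `N̂₋ᵢ`: the connected buyers with `i` and all of its descendants in the diffusion
critical tree removed. -/
noncomputable def NhatMinus (θ : Profile N) (rs : Finset N) (i : N) : Finset N :=
  Nhat θ rs \ desc θ rs i

/-- The `k'`-th highest element of a multiset of values (as an element of `ℝ≥0∞`):
`⊤` if `k' ≤ 0`, and `0` if the multiset has fewer than `k'` elements. -/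
noncomputable def kthHighest (s : Multiset ℝ≥0) (k' : ℕ) : ℝ≥0∞ :=
  if k' = 0 then ⊤
  else if s.card < k' then 0
  else ((s.sort (· ≤ ·)).getD (s.card - k') 0 : ℝ≥0)

/-- `v*(S, k')`: the `k'`-th highest reported value among the buyers in `S`. -/
noncomputable def vstar (θ : Profile N) (S : Finset N) (k' : ℕ) : ℝ≥0∞ :=
  kthHighest (S.val.map fun i => (θ i).1) k'

/-- The priority order on the connected buyers: ascending order of the distance `d(·)`,
with ties broken by the fixed linear order on `N` (mergeSort is stable). -/
noncomputable def prioList (θ : Profile N) (rs : Finset N) : List N :=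
  ((Nhat θ rs).sort (· ≤ ·)).mergeSort fun i j => decide (dNet θ rs i ≤ dNet θ rs j)

/-- One run of the distance-based mechanism over a list of buyers (in priority order),
given the current winner set `W` and the remaining number of units `k'`; `extra` is an
additional pool of (dummy) values included in every price computation.
Buyer `i` faces the price `p = v*((N̂₋ᵢ ∖ W) + extra, k')` and wins (paying `p`)
iff her reported value is at least `p`. -/
noncomputable def runAux (θ : Profile N) (rs : Finset N) (extra : Multiset ℝ≥0) :
    List N → Finset N → ℕ → (N → ℕ) × (N → ℝ≥0)
  | [], _, _ => (fun _ => 0, fun _ => 0)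
  | i :: rest, W, k' =>
    let p : ℝ≥0∞ :=
      kthHighest (((NhatMinus θ rs i \ W).val.map fun j => (θ j).1) + extra) k'
    if (((θ i).1 : ℝ≥0∞)) ≥ p then
      let out := runAux θ rs extra rest (insert i W) (k' - 1)
      (Function.update out.1 i 1, Function.update out.2 i p.toNNReal)
    else
      let out := runAux θ rs extra rest W k'
      (Function.update out.1 i 0, Function.update out.2 i 0)

/-- The distance-based mechanism: `.1` is the allocation rule `f` (each buyer is mapped
to `1` if she wins a unit and to `0` otherwise; unconnected buyers get `0`) and `.2` is
the payment rule `t` (unconnected buyers and losers pay `0`). -/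
noncomputable def DBM (k : ℕ) (θ : Profile N) (rs : Finset N) : (N → ℕ) × (N → ℝ≥0) :=
  runAux θ rs 0 (prioList θ rs) ∅ k

/-- The distance-based mechanism with reserve price `vh`: `k` dummy buyers of value `vh`,
attached directly to the seller only (hence lying in every `N̂₋ᵢ` and never being
descendants of a real buyer), are added to every price pool, but they are never processed
as bidders and never win a unit. -/
noncomputable def DBMres (k : ℕ) (vh : ℝ≥0) (θ : Profile N) (rs : Finset N) :
    (N → ℕ) × (N → ℝ≥0) :=
  runAux θ rs (Multiset.replicate k vh) (prioList θ rs) ∅ k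

/-- The No-Diffusion-VCG mechanism: VCG applied to the direct buyers only. -/
noncomputable def NDVCG (k : ℕ) (θ : Profile N) (rs : Finset N) : (N → ℕ) × (N → ℝ≥0) :=
  (fun i => if i ∈ rs ∧ (((θ i).1 : ℝ≥0∞)) ≥ vstar θ (rs.erase i) k then 1 else 0,
   fun i => if i ∈ rs ∧ (((θ i).1 : ℝ≥0∞)) ≥ vstar θ (rs.erase i) k
     then (vstar θ (rs.erase i) k).toNNReal else 0)

/-- The FCFS-F mechanism: the first `k` connected buyers in the priority order get a
unit for free. -/
noncomputable def FCFS (k : ℕ) (θ : Profile N) (rs : Finset N) : (N → ℕ) × (N → ℝ≥0) :=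
  (fun i => if i ∈ (prioList θ rs).take k then 1 else 0, fun _ => 0)

theorem runAux_snd_le_fst_mul {N : Type*} [Fintype N] [DecidableEq N] (θ : Profile N)
    (rs : Finset N) (extra : Multiset ℝ≥0) (i : N) (L : List N) (W : Finset N) (k' : ℕ) :
    (runAux θ rs extra L W k').2 i ≤ (θ i).1 * (runAux θ rs extra L W k').1 i := by
  induction L generalizing W k' with
  | nil => simp [runAux]
  | cons j rest ih =>
    rw [runAux]
    split_ifs with hwin
    · rcases eq_or_ne i j with rfl | hij
      · simpa using ENNReal.toNNReal_mono ENNReal.coe_ne_top hwin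
      · simpa only [Function.update_of_ne hij] using ih _ _
    · rcases eq_or_ne i j with rfl | hij
      · simp
      · simpa only [Function.update_of_ne hij] using ih _ _

/-- The distance-based mechanism is individually rational: for every
buyer `i` with true type `θ i` and every profile of reports of the other buyers (the
remaining components of `θ`), if `i` reports truthfully then her utility
`v_i · f_i(θ) − t_i(θ)` is nonnegative. -/
theorem distanceBased_individuallyRational (k : ℕ) (θ : Profile N) (rs : Finset N)
    (i : N) :
    0 ≤ ((θ i).1 : ℝ) * ((DBM k θ rs).1 i : ℝ) - ((DBM k θ rs).2 i : ℝ) := by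
  have hpay : ((DBM k θ rs).2 i : ℝ) ≤ (θ i).1 * (DBM k θ rs).1 i := by
    exact_mod_cast runAux_snd_le_fst_mul θ rs 0 i (prioList θ rs) ∅ k
  exact sub_nonneg.mpr hpay

end SNA
end

section
/- The distance-based mechanism is non-wasteful: for every reported type profile θ', the number of units allocated satisfies Σ_{i∈N} f_i(θ') ≥ min{k, |N̂|}, where N̂ is the set of connected buyers. -/
open scoped Classical NNReal ENNReal

/-! If some of the `k` units are still unsold when the run ends, then no connected buyer
lost. Indeed, a buyer `j` who lost while `k'` units were left faced a price above her value,
so `k'` connected buyers who were not winners yet outbid her; after `j` fewer than `k'`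
units were sold, so one of them lost too. Hence a loser of highest value cannot exist. -/

namespace SNA

def Outbid {N : Type*} (θ : Profile N) (P : Finset N) (k' : ℕ) (j : N) : Prop :=
  k' ≤ (P.filter fun a => (θ j).1 < (θ a).1).card

section Outbid

variable {N : Type*} {θ : Profile N} {P Q : Finset N} {k' : ℕ} {j : N}

theorem Outbid.mono (h : Outbid θ P k' j) (hPQ : P ⊆ Q) : Outbid θ Q k' j :=
  h.trans (Finset.card_le_card (Finset.filter_subset_filter _ hPQ))

theorem Outbid.of_insert [DecidableEq N] {i : N} (h : Outbid θ (insert i P) (k' + 1) j) :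
    Outbid θ P k' j := by
  unfold Outbid at h ⊢
  rw [Finset.filter_insert] at h
  split_ifs at h
  · exact Nat.le_of_succ_le_succ (h.trans (Finset.card_insert_le _ _))
  · omega

theorem exists_not_outbid (hP : P.Nonempty) (hk : k' ≠ 0) : ∃ j ∈ P, ¬ Outbid θ P k' j := by
  obtain ⟨j, hj, hmax⟩ := Finset.exists_max_image P (fun a => (θ a).1) hP
  refine ⟨j, hj, fun h => hk ?_⟩
  have hempty : P.filter (fun a => (θ j).1 < (θ a).1) = ∅ :=
    Finset.filter_eq_empty_iff.mpr fun a ha => not_lt.mpr (hmax a ha)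
  simpa [Outbid, hempty] using h

end Outbid

theorem le_card_filter_lt_of_lt_kthHighest {s : Multiset ℝ≥0} {k' : ℕ} {v : ℝ≥0}
    (hk : k' ≠ 0) (h : (v : ℝ≥0∞) < kthHighest s k') :
    k' ≤ Multiset.card (s.filter (v < ·)) := by
  unfold kthHighest at h
  rw [if_neg hk] at h
  split_ifs at h with hc
  · simp at h
  set l := s.sort (· ≤ ·)
  have hlen : l.length = Multiset.card s := s.length_sort _
  set m := Multiset.card s - k'
  have hm : m < l.length := by omega
  rw [List.getD_eq_getElem _ _ hm, ENNReal.coe_lt_coe] at h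
  have hdrop : ∀ a ∈ l.drop m, v < a := by
    intro a ha
    obtain ⟨j, _, rfl⟩ := List.getElem_of_mem ha
    rw [List.getElem_drop]
    exact h.trans_le ((s.pairwise_sort _).sortedLE.getElem_le_getElem_of_le
      (Nat.le_add_right m j))
  calc k' = (l.drop m).countP (v < ·) := by
        rw [List.countP_eq_length.mpr (by simpa using hdrop), List.length_drop]; omega
    _ ≤ l.countP (v < ·) := (List.drop_sublist m l).countP_le
    _ = Multiset.card (s.filter (v < ·)) := by
        rw [← Multiset.countP_eq_card_filter, ← s.sort_eq (· ≤ ·), Multiset.coe_countP]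

theorem Fintype.sum_update_of_eq_zero {ι M : Type*} [Fintype ι] [DecidableEq ι]
    [AddCommMonoid M] {f : ι → M} {i : ι} (hf : f i = 0) (b : M) :
    ∑ j, Function.update f i b j = b + ∑ j, f j := by
  rw [Finset.sum_update_of_mem (Finset.mem_univ i), Finset.sdiff_singleton_eq_erase,
    Finset.sum_erase _ hf]

section Run

variable {N : Type*} [Fintype N] [DecidableEq N] (θ : Profile N) (rs : Finset N)

theorem runAux_fst_eq_zero_of_not_mem (extra : Multiset ℝ≥0) {L : List N} {j : N}
    (hj : j ∉ L) (W : Finset N) (k' : ℕ) : (runAux θ rs extra L W k').1 j = 0 := by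
  induction L generalizing W k' with
  | nil => rfl
  | cons i L ih =>
    obtain ⟨hji, hjL⟩ := not_or.mp (List.mem_cons.not.mp hj)
    rw [runAux]
    split_ifs <;> simp only [Function.update_of_ne hji, ih hjL]

theorem sum_runAux_cons (extra : Multiset ℝ≥0) {L : List N} {i : N} (hi : i ∉ L)
    (W : Finset N) (k' : ℕ) :
    ∑ j, (runAux θ rs extra (i :: L) W k').1 j =
      if ((θ i).1 : ℝ≥0∞) ≥
          kthHighest (((NhatMinus θ rs i \ W).val.map fun j => (θ j).1) + extra) k'
      then 1 + ∑ j, (runAux θ rs extra L (insert i W) (k' - 1)).1 j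
      else ∑ j, (runAux θ rs extra L W k').1 j := by
  rw [runAux]
  split_ifs <;> simp only [Fintype.sum_update_of_eq_zero
    (runAux_fst_eq_zero_of_not_mem θ rs extra hi _ _), zero_add]

theorem outbid_of_lt_price {i : N} {W : Finset N} {k' : ℕ} (hk : k' ≠ 0)
    (hlose : ((θ i).1 : ℝ≥0∞) <
      kthHighest (((NhatMinus θ rs i \ W).val.map fun j => (θ j).1) + 0) k') :
    Outbid θ (NhatMinus θ rs i \ W) k' i := by
  have := le_card_filter_lt_of_lt_kthHighest hk (by rwa [add_zero] at hlose)
  rw [← Multiset.countP_eq_card_filter, Multiset.countP_map] at this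
  exact this

/-- Invariant of a run: `W` are the winners so far, `L` the buyers still to be processed
and `D` the losers so far, each outbid `k'` times by non-winners. -/
theorem runAux_allocation_bound {L : List N} (hL : L.Nodup) {W D : Finset N} {k' : ℕ}
    (hpool : Nhat θ rs \ W ⊆ D ∪ L.toFinset)
    (hD : ∀ j ∈ D, Outbid θ (D ∪ L.toFinset) k' j) :
    min k' L.length ≤ ∑ i, (runAux θ rs 0 L W k').1 i ∧
      (D.Nonempty → k' ≤ ∑ i, (runAux θ rs 0 L W k').1 i) := by
  induction L generalizing W D k' with
  | nil =>
    have hsum : ∑ i, (runAux θ rs 0 [] W k').1 i = 0 := by simp [runAux]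
    refine ⟨by simp, fun hne => Nat.le_of_not_lt fun hlt => ?_⟩
    obtain ⟨j, hj, hnot⟩ := exists_not_outbid (θ := θ) (k' := k') hne (by omega)
    exact hnot (by simpa using hD j hj)
  | cons i L ih =>
    obtain ⟨hiL, hL⟩ := List.nodup_cons.mp hL
    rcases k' with _ | k'
    · simp
    have hunion : D ∪ (i :: L).toFinset = insert i D ∪ L.toFinset := by
      rw [List.toFinset_cons, Finset.union_insert, Finset.insert_union]
    rw [sum_runAux_cons θ rs 0 hiL]
    split_ifs with hwin
    · have hpool' : Nhat θ rs \ insert i W ⊆ D ∪ L.toFinset := by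
        intro x hx
        obtain ⟨hxN, hxiW⟩ := Finset.mem_sdiff.mp hx
        obtain ⟨hxi, hxW⟩ := not_or.mp (Finset.mem_insert.not.mp hxiW)
        simpa [hxi] using hpool (Finset.mem_sdiff.mpr ⟨hxN, hxW⟩)
      have hD' : ∀ j ∈ D, Outbid θ (D ∪ L.toFinset) k' j := fun j hj =>
        Outbid.of_insert (by simpa [Finset.union_insert] using hD j hj)
      obtain ⟨hmin, hne⟩ := ih hL hpool' hD'
      simp only [List.length_cons, Nat.add_sub_cancel]
      exact ⟨by omega, fun h => by have := hne h; omega⟩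
    · have hi : Outbid θ (insert i D ∪ L.toFinset) (k' + 1) i :=
        (outbid_of_lt_price θ rs (Nat.succ_ne_zero k') (lt_of_not_ge hwin)).mono
          ((Finset.sdiff_subset_sdiff Finset.sdiff_subset le_rfl).trans (hunion ▸ hpool))
      have hD' : ∀ j ∈ insert i D, Outbid θ (insert i D ∪ L.toFinset) (k' + 1) j := by
        intro j hj
        rcases Finset.mem_insert.mp hj with rfl | hjD
        · exact hi
        · exact hunion ▸ hD j hjD
      have hall := (ih hL (hunion ▸ hpool) hD').2 (Finset.insert_nonempty i D)
      exact ⟨(min_le_left _ _).trans hall, fun _ => hall⟩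

end Run

theorem prioList_perm {N : Type*} [Fintype N] [DecidableEq N] [LinearOrder N]
    (θ : Profile N) (rs : Finset N) :
    (prioList θ rs).Perm ((Nhat θ rs).sort (· ≤ ·)) :=
  List.mergeSort_perm _ _

variable {N : Type*} [Fintype N] [DecidableEq N] [LinearOrder N]

/-- The distance-based mechanism is non-wasteful: for every reported
type profile, the number of allocated units is at least `min k |N̂|`. -/
theorem distanceBased_nonWasteful (k : ℕ) (θ : Profile N) (rs : Finset N) :
    min k (Nhat θ rs).card ≤ ∑ i, (DBM k θ rs).1 i := by
  have hperm := prioList_perm θ rs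
  have hpool : Nhat θ rs \ ∅ ⊆ ∅ ∪ (prioList θ rs).toFinset := by
    simp [List.toFinset_eq_of_perm _ _ hperm]
  have h := (runAux_allocation_bound θ rs (hperm.nodup_iff.mpr (Finset.sort_nodup _ _)) hpool
    (D := ∅) (k' := k) (by simp)).1
  rwa [hperm.length_eq, Finset.length_sort] at h

end SNA
end

section
/- The distance-based mechanism satisfies bounded efficiency: for every reported type profile θ' and every connected buyer i with f_i(θ') = 1, the number of buyers in N̂_{-i} whose reported value strictly exceeds v'_i is less than k; that is, every winner is among the top-k buyers when her descendants in the diffusion critical tree are excluded. -/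
open scoped Classical NNReal ENNReal

namespace SNA

variable {N : Type*} [Fintype N] [DecidableEq N] [LinearOrder N]

/-!
A buyer `i` who wins while `W` is the current set of winners and `k'` units remain has
value at least the `k'`-th highest value in `N̂₋ᵢ ∖ W`, so fewer than `k'` buyers of
`N̂₋ᵢ ∖ W` beat her. Every other buyer of `N̂₋ᵢ` who beats her lies in `W`, and along the run
`|W| + k'` never exceeds `k`.
-/

theorem _root_.List.Pairwise.length_filter_gt_le {α : Type*} [LinearOrder α] {l : List α}
    (hl : l.Pairwise (· ≤ ·)) {m : ℕ} (hm : m < l.length) {c : α} (hc : l[m] ≤ c) :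
    (l.filter fun x => c < x).length ≤ l.length - (m + 1) := by
  have htake : (l.take (m + 1)).filter (fun x => c < x) = [] := by
    refine List.filter_eq_nil_iff.2 fun x hx => ?_
    obtain ⟨j, hj, rfl⟩ := List.mem_take_iff_getElem.1 hx
    have hjm : l[j] ≤ l[m] :=
      hl.rel_get_of_le (a := ⟨j, by omega⟩) (b := ⟨m, hm⟩) (Fin.mk_le_mk.2 (by omega))
    simpa using hjm.trans hc
  rw [← List.take_append_drop (m + 1) l, List.filter_append, htake, List.nil_append,
    List.take_append_drop]
  simpa using List.length_filter_le _ (l.drop (m + 1))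

theorem card_filter_lt_lt_of_kthHighest_le {s : Multiset ℝ≥0} {k' : ℕ} {c : ℝ≥0}
    (h : kthHighest s k' ≤ c) : (s.filter fun x => c < x).card < k' := by
  unfold kthHighest at h
  split_ifs at h with hk hcard
  · simp at h
  · exact (Multiset.card_le_card (Multiset.filter_le _ s)).trans_lt hcard
  · set l := s.sort (· ≤ ·)
    have hlen : l.length = s.card := Multiset.length_sort _
    have hm : s.card - k' < l.length := by omega
    rw [List.getD_eq_getElem l 0 hm, ENNReal.coe_le_coe] at h
    have hs : (s.filter fun x => c < x) = ((l.filter fun x => c < x : List ℝ≥0) :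
        Multiset ℝ≥0) := by
      conv_lhs => rw [← Multiset.sort_eq s (· ≤ ·)]
      rw [Multiset.filter_coe]
    have hsorted : l.Pairwise (· ≤ ·) := Multiset.pairwise_sort s _
    have := hsorted.length_filter_gt_le hm h
    rw [hs, Multiset.coe_card]
    omega

theorem card_filter_lt_lt_of_kthHighest_sdiff_le {ι : Type*} [DecidableEq ι] {S W : Finset ι}
    {v : ι → ℝ≥0} {extra : Multiset ℝ≥0} {k' : ℕ} {c : ℝ≥0}
    (h : kthHighest (((S \ W).val.map v) + extra) k' ≤ c) :
    (S.filter fun j => c < v j).card < k' + W.card := by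
  have hout : ((S \ W).filter fun j => c < v j).card < k' := by
    refine lt_of_le_of_lt ?_ (card_filter_lt_lt_of_kthHighest_le h)
    rw [Multiset.filter_add, Multiset.card_add, Multiset.filter_map, Multiset.card_map]
    exact Nat.le_add_right _ _
  have hsub : S.filter (fun j => c < v j) ⊆ (S \ W).filter (fun j => c < v j) ∪ W := by
    intro j hj
    by_cases hjW : j ∈ W
    · exact Finset.mem_union_right _ hjW
    · simp only [Finset.mem_filter, Finset.mem_sdiff, Finset.mem_union] at hj ⊢
      exact Or.inl ⟨⟨hj.1, hjW⟩, hj.2⟩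
  calc (S.filter fun j => c < v j).card
      ≤ ((S \ W).filter (fun j => c < v j) ∪ W).card := Finset.card_le_card hsub
    _ ≤ ((S \ W).filter (fun j => c < v j)).card + W.card := Finset.card_union_le _ _
    _ < k' + W.card := by omega

set_option linter.unusedSectionVars false in
theorem card_filter_lt_lt_of_runAux_fst_eq_one (θ : Profile N) (rs : Finset N)
    (extra : Multiset ℝ≥0) {i : N} :
    ∀ {L : List N} {W : Finset N} {k' : ℕ}, (runAux θ rs extra L W k').1 i = 1 →
      ((NhatMinus θ rs i).filter fun j => (θ i).1 < (θ j).1).card < k' + W.card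
  | [], _, _, hw => by simp [runAux] at hw
  | a :: rest, W, k', hw => by
    rw [runAux] at hw
    split_ifs at hw with hwin <;> simp only at hw
    · obtain rfl | hai := eq_or_ne a i
      · exact card_filter_lt_lt_of_kthHighest_sdiff_le hwin
      · have hk' : 0 < k' := (card_filter_lt_lt_of_kthHighest_le hwin).trans_le' (Nat.zero_le _)
        have ih := card_filter_lt_lt_of_runAux_fst_eq_one θ rs extra
          (by rwa [Function.update_of_ne hai.symm] at hw)
        have := Finset.card_insert_le a W
        omega
    · obtain rfl | hai := eq_or_ne a i
      · simp at hw
      · exact card_filter_lt_lt_of_runAux_fst_eq_one θ rs extra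
          (by rwa [Function.update_of_ne hai.symm] at hw)

theorem distanceBased_boundedEfficiency_general (k : ℕ) (θ : Profile N) (rs : Finset N) (i : N)
    (hw : (DBM k θ rs).1 i = 1) :
    ((NhatMinus θ rs i).filter fun j => (θ i).1 < (θ j).1).card < k :=
  card_filter_lt_lt_of_runAux_fst_eq_one θ rs 0 hw

/-- **Proposition 1.** The distance-based mechanism satisfies bounded
efficiency: every connected winner `i` is among the top-`k` buyers once her descendants
in the diffusion critical tree are excluded, i.e. fewer than `k` buyers of `N̂₋ᵢ` have a
reported value strictly exceeding `i`'s. -/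
theorem distanceBased_boundedEfficiency (k : ℕ) (θ : Profile N) (rs : Finset N) (i : N)
    (hc : Connected θ rs i) (hw : (DBM k θ rs).1 i = 1) :
    ((NhatMinus θ rs i).filter fun j => (θ i).1 < (θ j).1).card < k :=
  distanceBased_boundedEfficiency_general k θ rs i hw

end SNA
end

section
/- The distance-based mechanism dominates FCFS-F in terms of social surplus, but not vice versa: for every set N of buyers and every reported type profile θ', Σ_{i∈N} v'_i·f_i(θ') ≥ Σ_{i∈N} v'_i·f^F_i(θ'), where f is the distance-based allocation and f^F the FCFS-F allocation; moreover, there exists an instance for which the inequality is strict. -/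
open scoped Classical NNReal ENNReal

/-!
Both mechanisms scan the connected buyers in the same priority order, and FCFS-F serves the
first `k` of them. A buyer is never a descendant of a buyer of no larger distance, so the price
pool `N̂₋ᵢ` of every buyer contains all buyers before her. Since the values are nonnegative, it
suffices to show that for every threshold `x` the distance-based mechanism serves at least as
many buyers of value `≥ x` ("high") as FCFS-F does. Two counts give this. A low winner placed
after the first `k` buyers beats every unserved high buyer before her, so the low winners never
outnumber the low buyers among the first `k`. And if `W` is the set of winners before the most
valuable high loser, her price is set by at least `k - |W|` buyers outside `W` of even higher
value, who therefore all win after her.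

For strictness, take two direct buyers of values `0` and `1` and a single unit: FCFS-F serves
the first one, the distance-based mechanism the second.
-/

namespace SNA

theorem lt_getElem_iff_length_sub_le_countP {α : Type*} [LinearOrder α] {l : List α}
    (hl : l.Pairwise (· ≤ ·)) {m : ℕ} (hm : m < l.length) (c : α) :
    c < l[m] ↔ l.length - m ≤ l.countP (c < ·) := by
  have hsplit : l = l.take m ++ l[m] :: l.drop (m + 1) := by
    rw [← List.drop_eq_getElem_cons hm, List.take_append_drop]
  have hpw := hl
  rw [hsplit, List.pairwise_append, List.pairwise_cons] at hpw
  obtain ⟨-, ⟨hge, -⟩, hle⟩ := hpw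
  have hlen : (l.drop (m + 1)).length = l.length - m - 1 := List.length_drop ..
  have hcount : l.countP (c < ·) = (l.take m).countP (c < ·) +
      ((l.drop (m + 1)).countP (c < ·) + if decide (c < l[m]) then 1 else 0) := by
    conv_lhs => rw [hsplit]
    rw [List.countP_append, List.countP_cons]
  rw [hcount]
  constructor
  · intro hc
    have : (l.drop (m + 1)).countP (c < ·) = (l.drop (m + 1)).length :=
      List.countP_eq_length.2 fun b hb => decide_eq_true (hc.trans_le (hge b hb))
    simp only [hc, decide_true, if_true]
    omega
  · intro hk
    by_contra hc
    rw [not_lt] at hc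
    have hA : (l.take m).countP (c < ·) = 0 := List.countP_eq_zero.2 fun a ha => by
      simpa using (hle a ha _ List.mem_cons_self).trans hc
    have hB := (l.drop (m + 1)).countP_le_length (p := (c < ·))
    simp only [not_lt.2 hc, decide_false, Bool.false_eq_true, if_false] at hk
    omega

theorem lt_kthHighest_iff (s : Multiset ℝ≥0) (k' : ℕ) (c : ℝ≥0) :
    (c : ℝ≥0∞) < kthHighest s k' ↔ k' ≤ (s.filter (c < ·)).card := by
  have hcount : (s.filter (c < ·)).card = (s.sort (· ≤ ·)).countP (c < ·) := by
    rw [← Multiset.countP_eq_card_filter, ← Multiset.coe_countP, Multiset.sort_eq]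
  unfold kthHighest
  split_ifs with h0 hcard
  · simp [h0]
  · simp only [ENNReal.not_lt_zero, false_iff, not_le]
    exact (Multiset.card_le_card (Multiset.filter_le _ s)).trans_lt hcard
  · have hm : s.card - k' < (s.sort (· ≤ ·)).length := by
      rw [Multiset.length_sort]; omega
    rw [List.getD_eq_getElem _ _ hm, ENNReal.coe_lt_coe,
      lt_getElem_iff_length_sub_le_countP (Multiset.pairwise_sort s _) hm, ← hcount,
      Multiset.length_sort]
    omega

theorem lt_kthHighest_map_iff {ι : Type*} (S : Finset ι) (v : ι → ℝ≥0) (k' : ℕ) (c : ℝ≥0) :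
    (c : ℝ≥0∞) < kthHighest (S.val.map v) k' ↔ k' ≤ (S.filter (c < v ·)).card := by
  rw [lt_kthHighest_iff, Multiset.filter_map, Multiset.card_map]
  rfl

theorem sum_le_sum_of_card_filter_le {ι M : Type*} [DecidableEq ι] [AddCommMonoid M] [LinearOrder M]
    [IsOrderedAddMonoid M] {f : ι → M} (hf : ∀ i, 0 ≤ f i) {s t : Finset ι}
    (h : ∀ x, (s.filter (x ≤ f ·)).card ≤ (t.filter (x ≤ f ·)).card) :
    ∑ i ∈ s, f i ≤ ∑ i ∈ t, f i := by
  induction s using Finset.induction_on_max_value f generalizing t with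
  | empty => simpa using Finset.sum_nonneg fun i _ => hf i
  | insert a s ha hmax ih =>
    have hsa : a ∈ (insert a s).filter (f a ≤ f ·) := by simp
    obtain ⟨c, hc⟩ := Finset.card_pos.1 ((Finset.card_pos.2 ⟨a, hsa⟩).trans_le (h (f a)))
    obtain ⟨b, hb, hbmax⟩ := t.exists_max_image f ⟨c, (Finset.mem_filter.1 hc).1⟩
    have hab : f a ≤ f b := (Finset.mem_filter.1 hc).2.trans (hbmax c (Finset.mem_filter.1 hc).1)
    rw [Finset.sum_insert ha, ← Finset.add_sum_erase t f hb]
    refine add_le_add hab (ih fun x => ?_)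
    by_cases hx : x ≤ f a
    · have hcount := h x
      rw [Finset.filter_insert, if_pos hx, Finset.card_insert_of_notMem (by simp [ha])] at hcount
      rw [Finset.filter_erase, Finset.card_erase_of_mem (Finset.mem_filter.2 ⟨hb, hx.trans hab⟩)]
      omega
    · rw [Finset.filter_false_of_mem fun y hy hxy => hx (hxy.trans (hmax y hy))]
      exact Nat.zero_le _

theorem sum_mul_ite_mem {ι : Type*} [Fintype ι] [DecidableEq ι] (s : Finset ι) (f : ι → ℝ) :
    ∑ i, f i * (((if i ∈ s then 1 else 0 : ℕ)) : ℝ) = ∑ i ∈ s, f i := by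
  simp [Finset.sum_ite_mem]

theorem getElem_notMem_take {β : Type*} {P : List β} (hP : P.Nodup) {t : ℕ} (ht : t < P.length) :
    P[t] ∉ P.take t := fun h => by
  obtain ⟨j, hj, hjt⟩ := List.mem_take_iff_getElem.1 h
  have := (hP.getElem_inj_iff).1 hjt
  omega

theorem getElem_notMem_drop {β : Type*} {P : List β} (hP : P.Nodup) {t : ℕ} (ht : t < P.length) :
    P[t] ∉ P.drop (t + 1) := fun h => by
  obtain ⟨j, hj, hjt⟩ := List.mem_drop_iff_getElem.1 h
  have := (hP.getElem_inj_iff).1 hjt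
  omega

section SequentialAuction

variable {ι α : Type*} [DecidableEq ι] [LinearOrder α] (v : ι → α) (pool : ι → Finset ι) (k : ℕ)

-- The distance-based rule with its price unfolded: `v i ≥ v*(pool i \ W, k')` iff fewer than
-- `k'` members of `pool i \ W` bid strictly more than `v i`.
def auctionStep (W : Finset ι) (i : ι) : Finset ι :=
  if ((pool i \ W).filter (v i < v ·)).card < k - W.card then insert i W else W

def auctionWinners (L : List ι) : Finset ι :=
  L.foldl (auctionStep v pool k) ∅

variable {v pool k}

theorem subset_foldl_auctionStep (L : List ι) (W : Finset ι) :
    W ⊆ L.foldl (auctionStep v pool k) W := by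
  induction L generalizing W with
  | nil => exact subset_rfl
  | cons i L ih =>
    refine subset_trans ?_ (ih _)
    unfold auctionStep
    split_ifs
    exacts [Finset.subset_insert i W, subset_rfl]

theorem foldl_auctionStep_subset (L : List ι) (W : Finset ι) :
    L.foldl (auctionStep v pool k) W ⊆ W ∪ L.toFinset := by
  induction L generalizing W with
  | nil => simp
  | cons i L ih =>
    refine (ih _).trans ?_
    unfold auctionStep
    split_ifs
    · intro b; simp only [Finset.mem_union, Finset.mem_insert, List.toFinset_cons]; tauto
    · exact Finset.union_subset_union subset_rfl (by simp)

theorem auctionWinners_subset (L : List ι) : auctionWinners v pool k L ⊆ L.toFinset := by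
  simpa [auctionWinners] using foldl_auctionStep_subset (v := v) (pool := pool) (k := k) L ∅

theorem auctionWinners_take_subset (P : List ι) (t : ℕ) :
    auctionWinners v pool k (P.take t) ⊆ auctionWinners v pool k P := by
  conv_rhs => rw [← List.take_append_drop t P, auctionWinners, List.foldl_append]
  exact subset_foldl_auctionStep _ _

theorem auctionWinners_take_add_one {P : List ι} {t : ℕ} (ht : t < P.length) :
    auctionWinners v pool k (P.take (t + 1)) =
      auctionStep v pool k (auctionWinners v pool k (P.take t)) P[t] := by
  rw [auctionWinners, auctionWinners, ← List.take_concat_get' P t ht, List.foldl_concat]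

theorem getElem_notMem_auctionWinners_take {P : List ι} (hP : P.Nodup) {t : ℕ}
    (ht : t < P.length) : P[t] ∉ auctionWinners v pool k (P.take t) := fun h =>
  getElem_notMem_take hP ht (List.mem_toFinset.1 (auctionWinners_subset _ h))

theorem getElem_mem_auctionWinners_iff {P : List ι} (hP : P.Nodup) {t : ℕ} (ht : t < P.length) :
    P[t] ∈ auctionWinners v pool k P ↔
      ((pool P[t] \ auctionWinners v pool k (P.take t)).filter (v P[t] < v ·)).card <
        k - (auctionWinners v pool k (P.take t)).card := by
  have hlast : auctionWinners v pool k P =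
      (P.drop (t + 1)).foldl (auctionStep v pool k) (auctionWinners v pool k (P.take (t + 1))) := by
    conv_lhs => rw [← List.take_append_drop (t + 1) P, auctionWinners, List.foldl_append]
    rfl
  have hnext : P[t] ∈ auctionWinners v pool k P ↔
      P[t] ∈ auctionWinners v pool k (P.take (t + 1)) := by
    refine ⟨fun h => ?_, fun h => auctionWinners_take_subset P _ h⟩
    rw [hlast] at h
    simpa [getElem_notMem_drop hP ht] using foldl_auctionStep_subset _ _ h
  rw [hnext, auctionWinners_take_add_one ht, auctionStep]
  split_ifs with hwin
  · simpa using hwin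
  · simpa [getElem_notMem_auctionWinners_take hP ht] using hwin

variable {P : List ι} (x : α)

theorem card_filter_not_le_lt_of_low_winner (hP : P.Nodup)
    (hprefix : ∀ t (ht : t < P.length), (P.take t).toFinset ⊆ pool P[t]) {s : ℕ}
    (hs : s < P.length) (hks : k ≤ s) (hlow : ¬ x ≤ v P[s])
    (hwin : ((pool P[s] \ auctionWinners v pool k (P.take s)).filter (v P[s] < v ·)).card <
      k - (auctionWinners v pool k (P.take s)).card) :
    ((auctionWinners v pool k (P.take s)).filter (¬ x ≤ v ·)).card <
      ((P.take k).toFinset.filter (¬ x ≤ v ·)).card := by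
  set W := auctionWinners v pool k (P.take s)
  set F := (P.take k).toFinset
  set T := ((P.take s).toFinset \ W).filter (x ≤ v ·)
  -- every unserved high buyer before `P[s]` lies in its pool and outbids it
  have hT : T.card < k - W.card := by
    refine lt_of_le_of_lt (Finset.card_le_card fun b hb => ?_) hwin
    obtain ⟨hb, hbx⟩ := Finset.mem_filter.1 hb
    obtain ⟨hbs, hbW⟩ := Finset.mem_sdiff.1 hb
    exact Finset.mem_filter.2 ⟨Finset.mem_sdiff.2 ⟨hprefix s hs hbs, hbW⟩,
      (lt_of_not_ge hlow).trans_le hbx⟩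
  have hFk : F.card = k := by
    rw [List.toFinset_card_of_nodup (hP.sublist (List.take_sublist _ _)), List.length_take]
    omega
  have hFs : (F.filter (x ≤ v ·)).card ≤ ((P.take s).toFinset.filter (x ≤ v ·)).card := by
    refine Finset.card_le_card (Finset.filter_subset_filter _ fun b => ?_)
    simp only [F, List.mem_toFinset]
    exact fun hb => List.take_subset_take_left P hks hb
  have hsT : ((P.take s).toFinset.filter (x ≤ v ·)).card ≤ (W.filter (x ≤ v ·)).card + T.card := by
    refine (Finset.card_le_card fun b hb => ?_).trans (Finset.card_union_le _ _)
    rw [Finset.mem_filter] at hb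
    by_cases hbW : b ∈ W
    · exact Finset.mem_union_left _ (Finset.mem_filter.2 ⟨hbW, hb.2⟩)
    · exact Finset.mem_union_right _ (Finset.mem_filter.2 ⟨Finset.mem_sdiff.2 ⟨hb.1, hbW⟩, hb.2⟩)
  have hWsplit := Finset.card_filter_add_card_filter_not (s := W) (x ≤ v ·)
  have hFsplit := Finset.card_filter_add_card_filter_not (s := F) (x ≤ v ·)
  omega

theorem card_filter_not_le_auctionWinners_take (hP : P.Nodup)
    (hprefix : ∀ t (ht : t < P.length), (P.take t).toFinset ⊆ pool P[t]) {t : ℕ}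
    (ht : t ≤ P.length) :
    ((auctionWinners v pool k (P.take t)).filter (¬ x ≤ v ·)).card ≤
      ((P.take k).toFinset.filter (¬ x ≤ v ·)).card := by
  induction t with
  | zero => simp [auctionWinners]
  | succ s ih =>
    by_cases hsk : s + 1 ≤ k
    · refine Finset.card_le_card (Finset.filter_subset_filter _ fun b hb => ?_)
      have hb := List.mem_toFinset.1 (auctionWinners_subset _ hb)
      exact List.mem_toFinset.2 (List.take_subset_take_left _ hsk hb)
    have hs : s < P.length := by omega
    rw [auctionWinners_take_add_one hs, auctionStep]
    split_ifs with hwin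
    · by_cases hlow : x ≤ v P[s]
      · rw [Finset.filter_insert, if_neg (not_not_intro hlow)]
        exact ih (by omega)
      rw [Finset.filter_insert, if_pos hlow, Finset.card_insert_of_notMem fun h =>
        getElem_notMem_auctionWinners_take hP hs (Finset.mem_filter.1 h).1]
      exact card_filter_not_le_lt_of_low_winner x hP hprefix hs (by omega) hlow hwin
    · exact ih (by omega)

theorem card_filter_le_add_of_max_loser (hP : P.Nodup) (hpool : ∀ i, pool i ⊆ P.toFinset)
    {t : ℕ} (ht : t < P.length) (hx : x ≤ v P[t]) (hlose : P[t] ∉ auctionWinners v pool k P)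
    (hmax : ∀ b ∈ P, b ∉ auctionWinners v pool k P → v b ≤ v P[t]) :
    ((auctionWinners v pool k (P.take t)).filter (x ≤ v ·)).card +
        (k - (auctionWinners v pool k (P.take t)).card) ≤
      ((auctionWinners v pool k P).filter (x ≤ v ·)).card := by
  set W := auctionWinners v pool k P
  set Wt := auctionWinners v pool k (P.take t)
  set S := (pool P[t] \ Wt).filter (v P[t] < v ·)
  have hS : k - Wt.card ≤ S.card := not_lt.1 ((getElem_mem_auctionWinners_iff hP ht).not.1 hlose)
  -- the bidders that outbid the best loser `P[t]` can only be later winners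
  have hSW : ∀ b ∈ S, b ∈ W ∧ x ≤ v b := by
    intro b hb
    obtain ⟨hb, hvb⟩ := Finset.mem_filter.1 hb
    refine ⟨by_contra fun hbW => ?_, hx.trans hvb.le⟩
    exact (hmax b (List.mem_toFinset.1 (hpool _ (Finset.mem_sdiff.1 hb).1)) hbW).not_gt hvb
  have hdisj : Disjoint (Wt.filter (x ≤ v ·)) S := Finset.disjoint_left.2 fun b hb hbS =>
    (Finset.mem_sdiff.1 (Finset.mem_filter.1 hbS).1).2 (Finset.mem_filter.1 hb).1
  have hunion : Wt.filter (x ≤ v ·) ∪ S ⊆ W.filter (x ≤ v ·) := by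
    refine Finset.union_subset (Finset.filter_subset_filter _ (auctionWinners_take_subset P t))
      fun b hb => Finset.mem_filter.2 (hSW b hb)
  have := Finset.card_le_card hunion
  rw [Finset.card_union_of_disjoint hdisj] at this
  omega

theorem card_filter_take_le_card_filter_auctionWinners (hP : P.Nodup)
    (hpool : ∀ i, pool i ⊆ P.toFinset)
    (hprefix : ∀ t (ht : t < P.length), (P.take t).toFinset ⊆ pool P[t]) :
    ((P.take k).toFinset.filter (x ≤ v ·)).card ≤
      ((auctionWinners v pool k P).filter (x ≤ v ·)).card := by
  set W := auctionWinners v pool k P with hW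
  by_cases hloser : ∃ b ∈ P, b ∉ W ∧ x ≤ v b
  · obtain ⟨b, hbP, hbW, hbx⟩ := hloser
    obtain ⟨j, hj, hjmax⟩ :=
      (P.toFinset \ W).exists_max_image v ⟨b, by simp [hbP, hbW]⟩
    rw [Finset.mem_sdiff, List.mem_toFinset] at hj
    obtain ⟨t, ht, rfl⟩ := List.mem_iff_getElem.1 hj.1
    have hmax := card_filter_le_add_of_max_loser x hP hpool ht
      (hbx.trans (hjmax b (by simp [hbP, hbW]))) hj.2
      fun b hb hbW => hjmax b (Finset.mem_sdiff.2 ⟨List.mem_toFinset.2 hb, hbW⟩)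
    rw [← hW] at hmax
    have hlow := card_filter_not_le_auctionWinners_take (v := v) (k := k) x hP hprefix ht.le
    have hWsplit := Finset.card_filter_add_card_filter_not
      (s := auctionWinners v pool k (P.take t)) (x ≤ v ·)
    have hFsplit := Finset.card_filter_add_card_filter_not (s := (P.take k).toFinset) (x ≤ v ·)
    have hFk : (P.take k).toFinset.card ≤ k :=
      (List.toFinset_card_le _).trans (List.length_take_le _ _)
    omega
  · simp only [not_exists, not_and] at hloser
    refine Finset.card_le_card fun b hb => ?_
    obtain ⟨hb, hbx⟩ := Finset.mem_filter.1 hb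
    have hbP := List.mem_of_mem_take (List.mem_toFinset.1 hb)
    exact Finset.mem_filter.2 ⟨by_contra fun hbW => hloser b hbP hbW hbx, hbx⟩

end SequentialAuction

variable {N : Type*} {θ : Profile N} {rs : Finset N}

theorem reachInAvoid_or_exists_reachIn_lt {i : N} :
    ∀ {m u}, reachIn θ rs m u → u ≠ i →
      reachInAvoid θ rs i m u ∨ ∃ m' < m, reachIn θ rs m' i
  | 0, _, hu, hne => Or.inl ⟨hu, hne⟩
  | m + 1, _, ⟨j, hj, hmem⟩, hne => by
    by_cases hji : j = i
    · exact Or.inr ⟨m, m.lt_succ_self, hji ▸ hj⟩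
    · rcases reachInAvoid_or_exists_reachIn_lt hj hji with h | ⟨m', hm', hr⟩
      · exact Or.inl ⟨j, h, hmem, hne⟩
      · exact Or.inr ⟨m', hm'.trans m.lt_succ_self, hr⟩

theorem dNet_le {i : N} {m : ℕ} (h : reachIn θ rs m i) : dNet θ rs i ≤ m + 1 :=
  sInf_le ⟨m, h, rfl⟩

theorem le_dNet {i : N} {m : ℕ} (h : ∀ m', reachIn θ rs m' i → m ≤ m') :
    (m : ℕ∞) + 1 ≤ dNet θ rs i :=
  le_sInf fun _ ⟨m', hm', hn⟩ => hn ▸ by gcongr; exact_mod_cast h m' hm'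

theorem dNet_lt_of_criticalParent {i u : N} (h : CriticalParent θ rs i u) :
    dNet θ rs i < dNet θ rs u := by
  obtain ⟨hu, -, hne, havoid⟩ := h
  rcases reachInAvoid_or_exists_reachIn_lt (Nat.find_spec hu) (Ne.symm hne) with h | ⟨m', hm', hi⟩
  · exact absurd ⟨_, h⟩ havoid
  calc dNet θ rs i ≤ m' + 1 := dNet_le hi
    _ < Nat.find hu + 1 := by exact_mod_cast Nat.succ_lt_succ hm'
    _ ≤ dNet θ rs u := le_dNet fun _ => Nat.find_min' hu

theorem dNet_eq_one_of_mem {i : N} (hi : i ∈ rs) : dNet θ rs i = 1 :=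
  le_antisymm (by simpa using dNet_le (m := 0) hi)
    (by simpa using le_dNet (m := 0) fun _ _ => Nat.zero_le _)

theorem mem_prioList [Fintype N] [LinearOrder N] {i : N} : i ∈ prioList θ rs ↔ i ∈ Nhat θ rs := by
  rw [prioList, List.mem_mergeSort, Finset.mem_sort]

theorem prioList_nodup [Fintype N] [LinearOrder N] : (prioList θ rs).Nodup :=
  (List.mergeSort_perm _ _).nodup_iff.2 (Finset.sort_nodup _ _)

theorem prioList_pairwise_dNet_le [Fintype N] [LinearOrder N] :
    (prioList θ rs).Pairwise fun a b => dNet θ rs a ≤ dNet θ rs b := by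
  refine (List.pairwise_mergeSort (fun a b c hab hbc => ?_) (fun a b => ?_) _).imp (by simp)
  · simp only [decide_eq_true_eq] at *
    exact hab.trans hbc
  · simpa using le_total _ _

theorem NhatMinus_subset_prioList [Fintype N] [DecidableEq N] [LinearOrder N] (i : N) :
    NhatMinus θ rs i ⊆ (prioList θ rs).toFinset :=
  fun _ hb => List.mem_toFinset.2 (mem_prioList.2 (Finset.mem_sdiff.1 hb).1)

theorem take_prioList_subset_NhatMinus [Fintype N] [DecidableEq N] [LinearOrder N] {t : ℕ}
    (ht : t < (prioList θ rs).length) :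
    ((prioList θ rs).take t).toFinset ⊆ NhatMinus θ rs (prioList θ rs)[t] := by
  intro b hb
  obtain ⟨s, hs, rfl⟩ := List.mem_take_iff_getElem.1 (List.mem_toFinset.1 hb)
  refine Finset.mem_sdiff.2 ⟨mem_prioList.1 (List.getElem_mem _), fun hdesc => ?_⟩
  have hst : s < t := by omega
  obtain ⟨-, heq | hcp⟩ := (Finset.mem_filter.1 hdesc).2
  · exact absurd ((prioList_nodup.getElem_inj_iff).1 heq) hst.ne
  · exact (dNet_lt_of_criticalParent hcp).not_ge
      (List.pairwise_iff_getElem.1 prioList_pairwise_dNet_le s t _ ht hst)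

theorem runAux_fst_eq [Fintype N] [DecidableEq N] (k : ℕ) :
    ∀ {L : List N} {W : Finset N}, L.Nodup → (∀ i ∈ L, i ∉ W) →
      (runAux θ rs 0 L W (k - W.card)).1 = fun j =>
        if j ∈ L.foldl (auctionStep (fun i => (θ i).1) (NhatMinus θ rs) k) W \ W then 1 else 0
  | [], W, _, _ => by simp [runAux]
  | i :: L, W, hL, hLW => by
    rw [List.nodup_cons] at hL
    have hiW := hLW i List.mem_cons_self
    have hLW' : ∀ j ∈ L, j ∉ W := fun j hj => hLW j (List.mem_cons_of_mem _ hj)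
    have hiX : i ∉ L.foldl (auctionStep (fun i => (θ i).1) (NhatMinus θ rs) k) W := fun h => by
      rcases Finset.mem_union.1 (foldl_auctionStep_subset L W h) with h | h
      exacts [hiW h, hL.1 (List.mem_toFinset.1 h)]
    have hcond := (lt_kthHighest_map_iff (NhatMinus θ rs i \ W) (fun b => (θ b).1) (k - W.card)
      (θ i).1).not
    rw [not_le, not_lt] at hcond
    simp only [runAux, add_zero, List.foldl_cons, auctionStep, ge_iff_le, ← hcond]
    split_ifs
    · have hcard : k - W.card - 1 = k - (insert i W).card := by
        rw [Finset.card_insert_of_notMem hiW]; omega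
      have hsub := subset_foldl_auctionStep (v := fun i => (θ i).1) (pool := NhatMinus θ rs)
        (k := k) L (insert i W)
      rw [hcard, runAux_fst_eq k hL.2 fun j hj hjW => ?_]
      · funext j
        by_cases hji : j = i
        · subst hji; simp [hiW, hsub (Finset.mem_insert_self j W)]
        · simp [hji, Function.update_of_ne]
      · rcases Finset.mem_insert.1 hjW with rfl | hjW
        exacts [hL.1 hj, hLW' j hj hjW]
    · rw [runAux_fst_eq k hL.2 hLW']
      funext j
      by_cases hji : j = i
      · subst hji
        simp [hiX]
      · simp [hji, Function.update_of_ne]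

theorem DBM_fst_eq [Fintype N] [DecidableEq N] [LinearOrder N] (k : ℕ) (θ : Profile N)
    (rs : Finset N) :
    (DBM k θ rs).1 = fun j =>
      if j ∈ auctionWinners (fun i => (θ i).1) (NhatMinus θ rs) k (prioList θ rs) then 1
      else 0 := by
  have h := runAux_fst_eq (θ := θ) (rs := rs) k (L := prioList θ rs) (W := ∅) prioList_nodup
    (by simp)
  simp only [Finset.card_empty, Nat.sub_zero, Finset.sdiff_empty] at h
  exact h

theorem FCFS_fst_eq [Fintype N] [DecidableEq N] [LinearOrder N] (k : ℕ) (θ : Profile N)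
    (rs : Finset N) :
    (FCFS k θ rs).1 = fun j => if j ∈ ((prioList θ rs).take k).toFinset then 1 else 0 := by
  funext j
  simp [FCFS]

theorem Nhat_univ [Fintype N] (θ : Profile N) : Nhat θ Finset.univ = Finset.univ :=
  Finset.filter_true_of_mem fun i _ => ⟨0, Finset.mem_univ i⟩

theorem desc_univ [Fintype N] [DecidableEq N] (θ : Profile N) (i : N) :
    desc θ Finset.univ i = {i} := by
  ext j
  simp only [desc, Finset.mem_filter, Finset.mem_univ, true_and, Finset.mem_singleton]
  refine ⟨fun ⟨_, h⟩ => h.resolve_right fun ⟨_, _, hij, havoid⟩ => ?_,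
    fun h => ⟨⟨0, Finset.mem_univ j⟩, Or.inl h⟩⟩
  exact havoid ⟨0, Finset.mem_univ j, hij.symm⟩

theorem NhatMinus_univ [Fintype N] [DecidableEq N] (θ : Profile N) (i : N) :
    NhatMinus θ Finset.univ i = Finset.univ.erase i := by
  rw [NhatMinus, Nhat_univ, desc_univ, Finset.sdiff_singleton_eq_erase]

theorem prioList_univ [Fintype N] [LinearOrder N] (θ : Profile N) :
    prioList θ Finset.univ = Finset.univ.sort (· ≤ ·) := by
  rw [prioList, Nhat_univ]
  exact List.mergeSort_of_pairwise (List.pairwise_of_forall fun a b => by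
    simp [dNet_eq_one_of_mem (Finset.mem_univ _)])

theorem FCFS_surplus_le_DBM_surplus {M : Type} [Fintype M] [DecidableEq M] [LinearOrder M]
    (k : ℕ) (θ : Profile M) (rs : Finset M) :
    ∑ i, ((θ i).1 : ℝ) * ((FCFS k θ rs).1 i : ℝ) ≤ ∑ i, ((θ i).1 : ℝ) * ((DBM k θ rs).1 i : ℝ) := by
  simp only [FCFS_fst_eq, DBM_fst_eq, sum_mul_ite_mem]
  exact_mod_cast sum_le_sum_of_card_filter_le (fun _ => zero_le) fun x =>
    card_filter_take_le_card_filter_auctionWinners x prioList_nodup NhatMinus_subset_prioList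
      fun _ => take_prioList_subset_NhatMinus

theorem exists_FCFS_surplus_lt_DBM_surplus :
    ∃ (n k : ℕ) (θ : Profile (Fin n)) (rs : Finset (Fin n)),
      ∑ i, ((θ i).1 : ℝ) * ((FCFS k θ rs).1 i : ℝ) <
        ∑ i, ((θ i).1 : ℝ) * ((DBM k θ rs).1 i : ℝ) := by
  let θ : Profile (Fin 2) := ![(0, ∅), (1, ∅)]
  refine ⟨2, 1, θ, Finset.univ, ?_⟩
  have hprio : prioList θ Finset.univ = [0, 1] := by rw [prioList_univ, Fin.sort_univ]; rfl
  have hW : auctionWinners (fun i => (θ i).1) (NhatMinus θ Finset.univ) 1 [0, 1] = {1} := by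
    simp [auctionWinners, auctionStep, NhatMinus_univ, θ]
  simp [FCFS_fst_eq, DBM_fst_eq, hprio, hW, θ]

/-- The distance-based mechanism dominates FCFS-F in terms of social
surplus (for every set of buyers and every reported profile), but not vice versa: there
is an instance where the inequality is strict. -/
theorem distanceBased_dominates_FCFS_surplus :
    (∀ (M : Type) [Fintype M] [DecidableEq M] [LinearOrder M] (k : ℕ) (θ : Profile M)
        (rs : Finset M),
      ∑ i, ((θ i).1 : ℝ) * ((FCFS k θ rs).1 i : ℝ) ≤
        ∑ i, ((θ i).1 : ℝ) * ((DBM k θ rs).1 i : ℝ)) ∧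
    (∃ (n k : ℕ) (θ : Profile (Fin n)) (rs : Finset (Fin n)),
      ∑ i, ((θ i).1 : ℝ) * ((FCFS k θ rs).1 i : ℝ) <
        ∑ i, ((θ i).1 : ℝ) * ((DBM k θ rs).1 i : ℝ)) :=
  ⟨fun _ _ _ _ => FCFS_surplus_le_DBM_surplus, exists_FCFS_surplus_lt_DBM_surplus⟩

end SNA
end

section
/- The distance-based mechanism is not follower revenue monotonic: there exist a number of units k, a set N of buyers with true types, a set r_s of direct buyers, and a subset r'_s ⊂ r_s such that, when all buyers report truthfully, the seller's revenue Σ_{i∈N} t_i(θ | r'_s) obtained by sending the information only to r'_s strictly exceeds the revenue Σ_{i∈N} t_i(θ | r_s) obtained by sending it to all of r_s. (A concrete witness: k = 2, buyers i_1, i_2, i_3, i_4 with values 5, 20, 6, 15, r_s = {i_1, i_2, i_3}, i_1's follower set {i_4}, priority i_1 ≻ i_2 ≻ i_3 ≻ i_4; restricting to r'_s = {i_1, i_2} raises the revenue from 12 to 15.) -/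
open scoped Classical NNReal ENNReal

/-!
Take `k = 2` and buyers `0, 1, 2, 3` with values `5, 20, 6, 15`, the only follower link being
`0 → 3`. With direct buyers `{0, 1, 2}` the priority order is `0, 1, 2, 3`: buyer `0` faces
`v*({1, 2}, 2) = 6` and loses, `1` wins at `6`, `2` faces `v*({0, 3}, 1) = 15` and loses, and `3`
wins at `6`, for a revenue of `12`. Without buyer `2`, buyer `0` has a single competitor outside
her subtree `{0, 3}`, so her price `v*({1}, 2)` is `0` and she wins for free; buyer `1` then pays
`3`'s value `15`, and no unit is left for `3`: the revenue rises to `15`.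
-/

theorem Finset.sort_eq_of_val_eq {α : Type*} {s : Finset α} {l : List α} (r : α → α → Prop)
    [DecidableRel r] [IsTrans α r] [Std.Antisymm r] [Std.Total r]
    (hs : s.val = l) (hl : l.Pairwise r) : s.sort r = l := by
  rw [← Finset.sort_val, hs, Multiset.coe_sort, List.mergeSort_of_pairwise (by simpa using hl)]

namespace SNA

lemma kthHighest_zero (s : Multiset ℝ≥0) : kthHighest s 0 = ⊤ := if_pos rfl

lemma kthHighest_of_card_lt {s : Multiset ℝ≥0} {k : ℕ} (hk : k ≠ 0) (hs : s.card < k) :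
    kthHighest s k = 0 := by
  simp [kthHighest, hk, hs]

lemma kthHighest_coe_of_pairwise {l : List ℝ≥0} (hl : l.Pairwise (· ≤ ·)) {k : ℕ} (hk : k ≠ 0)
    (hkl : k ≤ l.length) : kthHighest l k = (l.getD (l.length - k) 0 : ℝ≥0) := by
  have hsort : (l : Multiset ℝ≥0).sort (· ≤ ·) = l := by
    rw [Multiset.coe_sort, List.mergeSort_of_pairwise (hl.imp decide_eq_true)]
  simp [kthHighest, hk, hkl.not_gt, hsort]

section Prices

variable {N : Type*} {θ : Profile N} {S : Finset N} {k : ℕ}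

lemma vstar_zero : vstar θ S 0 = ⊤ := kthHighest_zero _

lemma vstar_of_card_lt (hk : k ≠ 0) (hS : S.card < k) : vstar θ S k = 0 :=
  kthHighest_of_card_lt hk (by simpa using hS)

lemma vstar_eq_getD {l : List N} (hS : S.val = l)
    (hl : (l.map fun i => (θ i).1).Pairwise (· ≤ ·)) (hk : k ≠ 0) (hkl : k ≤ l.length) :
    vstar θ S k = ((l.map fun i => (θ i).1).getD (l.length - k) 0 : ℝ≥0) := by
  rw [vstar, hS, Multiset.map_coe, kthHighest_coe_of_pairwise hl hk (by simpa using hkl),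
    List.length_map]

variable [Fintype N] [DecidableEq N] {rs W : Finset N} {i : N} {rest : List N}

lemma runAux_payment_cons_of_le {p : ℝ≥0} (hp : vstar θ (NhatMinus θ rs i \ W) (k + 1) = p)
    (h : p ≤ (θ i).1) :
    (runAux θ rs 0 (i :: rest) W (k + 1)).2 =
      Function.update (runAux θ rs 0 rest (insert i W) k).2 i p := by
  simp only [vstar] at hp
  simp only [runAux, add_zero, hp, ge_iff_le, ENNReal.coe_le_coe, if_pos h, Nat.add_sub_cancel,
    ENNReal.toNNReal_coe]

lemma runAux_payment_cons_of_lt {p : ℝ≥0∞} (hp : vstar θ (NhatMinus θ rs i \ W) k = p)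
    (h : ((θ i).1 : ℝ≥0∞) < p) :
    (runAux θ rs 0 (i :: rest) W k).2 = Function.update (runAux θ rs 0 rest W k).2 i 0 := by
  subst hp
  simp only [vstar] at h
  simp only [runAux, add_zero, if_neg h.not_ge]

end Prices

section Distance

variable {N : Type*} {θ : Profile N} {rs : Finset N} {i : N}

lemma dNet_eq_of_reachIn {m : ℕ} (hm : reachIn θ rs m i)
    (hmin : ∀ m' < m, ¬ reachIn θ rs m' i) : dNet θ rs i = m + 1 := by
  refine le_antisymm (sInf_le ⟨m, hm, rfl⟩) (le_sInf ?_)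
  rintro _ ⟨m', hm', rfl⟩
  have : m ≤ m' := not_lt.1 fun h => hmin m' h hm'
  gcongr

lemma dNet_of_mem (hi : i ∈ rs) : dNet θ rs i = 1 := by
  simpa using dNet_eq_of_reachIn (m := 0) hi (by simp)

lemma prioList_eq_sort [Fintype N] [LinearOrder N]
    (hmono : MonotoneOn (dNet θ rs) (Nhat θ rs)) :
    prioList θ rs = (Nhat θ rs).sort (· ≤ ·) := by
  refine List.mergeSort_of_pairwise ((Finset.pairwise_sort _ _).imp_of_mem ?_)
  intro a b ha hb hab
  simpa using hmono (by simpa using ha) (by simpa using hb) hab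

end Distance

structure IsSingleLink {N : Type*} (θ : Profile N) (rs : Finset N) (a b : N) : Prop where
  mem_followers_iff : ∀ j i, i ∈ (θ j).2 ↔ j = a ∧ i = b
  source_mem : a ∈ rs
  target_not_mem : b ∉ rs

namespace IsSingleLink

variable {N : Type*} {θ : Profile N} {rs : Finset N} {a b : N}

lemma reachIn_iff (h : IsSingleLink θ rs a b) {m : ℕ} {i : N} :
    reachIn θ rs m i ↔ m = 0 ∧ i ∈ rs ∨ m = 1 ∧ i = b := by
  induction m generalizing i with
  | zero => simp [reachIn]
  | succ m ih =>
    simp only [reachIn, h.mem_followers_iff, ih]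
    constructor
    · rintro ⟨j, (⟨rfl, -⟩ | ⟨-, rfl⟩), rfl, rfl⟩
      · simp
      · exact absurd h.source_mem h.target_not_mem
    · rintro (⟨hm, -⟩ | ⟨hm, rfl⟩)
      · omega
      · obtain rfl : m = 0 := by omega
        exact ⟨a, .inl ⟨rfl, h.source_mem⟩, rfl, rfl⟩

lemma connected_iff (h : IsSingleLink θ rs a b) {i : N} :
    Connected θ rs i ↔ i ∈ rs ∨ i = b := by
  simp only [Connected, h.reachIn_iff]
  constructor
  · rintro ⟨m, ⟨-, hi⟩ | ⟨-, hi⟩⟩ <;> simp [hi]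
  · rintro (hi | hi)
    exacts [⟨0, .inl ⟨rfl, hi⟩⟩, ⟨1, .inr ⟨rfl, hi⟩⟩]

lemma reachInAvoid_iff (h : IsSingleLink θ rs a b) {x : N} {m : ℕ} {i : N} :
    reachInAvoid θ rs x m i ↔ m = 0 ∧ i ∈ rs ∧ i ≠ x ∨ m = 1 ∧ i = b ∧ x ≠ a ∧ x ≠ b := by
  induction m generalizing i with
  | zero => simp [reachInAvoid]
  | succ m ih =>
    simp only [reachInAvoid, h.mem_followers_iff, ih]
    constructor
    · rintro ⟨j, (⟨rfl, -, hx⟩ | ⟨-, rfl, -⟩), ⟨rfl, rfl⟩, hne⟩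
      · exact .inr ⟨rfl, rfl, Ne.symm hx, Ne.symm hne⟩
      · exact absurd h.source_mem h.target_not_mem
    · rintro (⟨hm, -⟩ | ⟨hm, rfl, hxa, hxb⟩)
      · omega
      · obtain rfl : m = 0 := by omega
        exact ⟨a, .inl ⟨rfl, h.source_mem, Ne.symm hxa⟩, ⟨rfl, rfl⟩, Ne.symm hxb⟩

lemma exists_reachInAvoid_iff (h : IsSingleLink θ rs a b) {x i : N} :
    (∃ m, reachInAvoid θ rs x m i) ↔ i ∈ rs ∧ i ≠ x ∨ i = b ∧ x ≠ a ∧ x ≠ b := by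
  simp only [h.reachInAvoid_iff]
  constructor
  · rintro ⟨m, ⟨-, hi⟩ | ⟨-, hi⟩⟩ <;> simp [hi]
  · rintro (hi | hi)
    exacts [⟨0, .inl ⟨rfl, hi⟩⟩, ⟨1, .inr ⟨rfl, hi⟩⟩]

lemma criticalParent_iff (h : IsSingleLink θ rs a b) {j i : N} :
    CriticalParent θ rs j i ↔ j = a ∧ i = b := by
  simp only [CriticalParent, h.connected_iff, h.exists_reachInAvoid_iff]
  constructor
  · rintro ⟨hi | rfl, -, hji, hcrit⟩
    · exact absurd (.inl ⟨hi, Ne.symm hji⟩) hcrit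
    · by_contra hja
      exact hcrit (.inr ⟨rfl, fun e => hja ⟨e, rfl⟩, hji⟩)
  · rintro ⟨rfl, rfl⟩
    exact ⟨.inr rfl, .inl h.source_mem, fun e => h.target_not_mem (e ▸ h.source_mem),
      by simp [h.target_not_mem]⟩

lemma dNet_target (h : IsSingleLink θ rs a b) : dNet θ rs b = 2 :=
  dNet_eq_of_reachIn (m := 1) (h.reachIn_iff.2 (.inr ⟨rfl, rfl⟩))
    (by simp [h.reachIn_iff, h.target_not_mem])

lemma monotoneOn_dNet [Fintype N] [LinearOrder N] (h : IsSingleLink θ rs a b)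
    (hmax : ∀ i ∈ rs, i < b) : MonotoneOn (dNet θ rs) (Nhat θ rs) := by
  have hN : ∀ {i}, i ∈ (Nhat θ rs : Set N) ↔ i ∈ rs ∨ i = b := by
    simp [Nhat, h.connected_iff]
  rintro i hi j hj hij
  rcases hN.1 hj with hj | rfl
  · rcases hN.1 hi with hi | rfl
    · rw [dNet_of_mem hi, dNet_of_mem hj]
    · exact absurd hij (hmax j hj).not_ge
  · rcases hN.1 hi with hi | rfl
    · rw [dNet_of_mem hi, h.dNet_target]
      norm_num
    · rfl

variable [Fintype N] [DecidableEq N]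

lemma nhat_eq (h : IsSingleLink θ rs a b) : Nhat θ rs = insert b rs := by
  ext i
  simp [Nhat, h.connected_iff, or_comm]

lemma mem_desc_iff (h : IsSingleLink θ rs a b) {i j : N} :
    j ∈ desc θ rs i ↔ Connected θ rs j ∧ (j = i ∨ i = a ∧ j = b) := by
  simp only [desc, Finset.mem_filter, Finset.mem_univ, true_and, h.criticalParent_iff]

lemma nhatMinus_source (h : IsSingleLink θ rs a b) : NhatMinus θ rs a = rs.erase a := by
  ext j
  simp only [NhatMinus, Nhat, Finset.mem_sdiff, Finset.mem_filter, Finset.mem_univ, true_and,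
    h.mem_desc_iff, h.connected_iff, Finset.mem_erase]
  grind [h.target_not_mem]

lemma nhatMinus_of_ne (h : IsSingleLink θ rs a b) {i : N} (hi : i ≠ a) :
    NhatMinus θ rs i = (insert b rs).erase i := by
  ext j
  simp only [NhatMinus, Nhat, Finset.mem_sdiff, Finset.mem_filter, Finset.mem_univ, true_and,
    h.mem_desc_iff, h.connected_iff, Finset.mem_erase, Finset.mem_insert]
  tauto

end IsSingleLink

def witness : Profile (Fin 4) := ![(5, {3}), (20, ∅), (6, ∅), (15, ∅)]

def directBuyers : Finset (Fin 4) := {0, 1, 2}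

def restrictedDirectBuyers : Finset (Fin 4) := {0, 1}

lemma witness_values :
    (witness 0).1 = 5 ∧ (witness 1).1 = 20 ∧ (witness 2).1 = 6 ∧ (witness 3).1 = 15 :=
  ⟨rfl, rfl, rfl, rfl⟩

lemma isSingleLink_witness {rs : Finset (Fin 4)} (h0 : 0 ∈ rs) (h3 : 3 ∉ rs) :
    IsSingleLink witness rs 0 3 :=
  ⟨by decide, h0, h3⟩

lemma prioList_witness {rs : Finset (Fin 4)} (h0 : 0 ∈ rs) (h3 : 3 ∉ rs) :
    prioList witness rs = (insert 3 rs).sort (· ≤ ·) := by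
  have h := isSingleLink_witness h0 h3
  have hmax : ∀ i ∈ rs, i < 3 := fun i hi => (Fin.le_last i).lt_of_ne (ne_of_mem_of_not_mem hi h3)
  rw [prioList_eq_sort (h.monotoneOn_dNet hmax), h.nhat_eq]

lemma payments_direct : (DBM 2 witness directBuyers).2 = ![0, 6, 0, 6] := by
  have h := isSingleLink_witness (rs := directBuyers) (by decide) (by decide)
  have p0 : vstar witness (NhatMinus witness directBuyers 0 \ ∅) 2 = (6 : ℝ≥0) := by
    rw [h.nhatMinus_source]
    exact vstar_eq_getD (l := [2, 1]) (by decide) (by norm_num [witness_values]) two_ne_zero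
      le_rfl
  have p1 : vstar witness (NhatMinus witness directBuyers 1 \ ∅) 2 = (6 : ℝ≥0) := by
    rw [h.nhatMinus_of_ne (by decide)]
    exact vstar_eq_getD (l := [0, 2, 3]) (by decide) (by norm_num [witness_values]) two_ne_zero
      (by simp)
  have p2 : vstar witness (NhatMinus witness directBuyers 2 \ {1}) 1 = (15 : ℝ≥0) := by
    rw [h.nhatMinus_of_ne (by decide)]
    exact vstar_eq_getD (l := [0, 3]) (by decide) (by norm_num [witness_values]) one_ne_zero
      (by simp)
  have p3 : vstar witness (NhatMinus witness directBuyers 3 \ {1}) 1 = (6 : ℝ≥0) := by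
    rw [h.nhatMinus_of_ne (by decide)]
    exact vstar_eq_getD (l := [0, 2]) (by decide) (by norm_num [witness_values]) one_ne_zero
      (by simp)
  have hprio : prioList witness directBuyers = [0, 1, 2, 3] := by
    rw [prioList_witness (by decide) (by decide)]
    exact Finset.sort_eq_of_val_eq _ (by decide) (by decide)
  rw [DBM, hprio, runAux_payment_cons_of_lt p0 (by norm_num [witness_values]),
    runAux_payment_cons_of_le p1 (by norm_num [witness_values]), Finset.insert_empty,
    runAux_payment_cons_of_lt p2 (by norm_num [witness_values]),
    runAux_payment_cons_of_le p3 (by norm_num [witness_values])]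
  funext i
  fin_cases i <;> rfl

lemma payments_restricted : (DBM 2 witness restrictedDirectBuyers).2 = ![0, 15, 0, 0] := by
  have h := isSingleLink_witness (rs := restrictedDirectBuyers) (by decide) (by decide)
  have p0 : vstar witness (NhatMinus witness restrictedDirectBuyers 0 \ ∅) 2 = (0 : ℝ≥0) := by
    rw [h.nhatMinus_source, ENNReal.coe_zero]
    exact vstar_of_card_lt two_ne_zero (by decide)
  have p1 : vstar witness (NhatMinus witness restrictedDirectBuyers 1 \ {0}) 1 = (15 : ℝ≥0) := by
    rw [h.nhatMinus_of_ne (by decide)]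
    exact vstar_eq_getD (l := [3]) (by decide) (by simp) one_ne_zero (by simp)
  have hprio : prioList witness restrictedDirectBuyers = [0, 1, 3] := by
    rw [prioList_witness (by decide) (by decide)]
    exact Finset.sort_eq_of_val_eq _ (by decide) (by decide)
  rw [DBM, hprio, runAux_payment_cons_of_le p0 zero_le, Finset.insert_empty,
    runAux_payment_cons_of_le p1 (by norm_num [witness_values]),
    runAux_payment_cons_of_lt vstar_zero ENNReal.coe_lt_top]
  funext i
  fin_cases i <;> rfl

/-- The distance-based mechanism is not follower revenue monotonic:
there are a number of units, a set of buyers with (truthfully reported) types, a set of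
direct buyers `rs`, and a subset `rs' ⊂ rs` such that sending the information only to
`rs'` yields a strictly larger revenue than sending it to all of `rs`.
(A concrete witness: `k = 2`, buyers with values `5, 20, 6, 15`, `rs = {i₁, i₂, i₃}`,
`i₁` forwarding to `i₄`; restricting to `rs' = {i₁, i₂}` raises the revenue from `12`
to `15`.) -/
theorem distanceBased_not_followerRevenueMonotonic :
    ∃ (n k : ℕ) (θ : Profile (Fin n)) (rs rs' : Finset (Fin n)),
      rs' ⊂ rs ∧
      ∑ i, ((DBM k θ rs).2 i : ℝ) < ∑ i, ((DBM k θ rs').2 i : ℝ) := by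
  refine ⟨4, 2, witness, directBuyers, restrictedDirectBuyers, by decide, ?_⟩
  rw [payments_direct, payments_restricted]
  simp [Fin.sum_univ_four]
  norm_num

end SNA
end
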